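/- arXiv:2411.11265 — 3 statements merged into one kernel-verified Lean document; each statement's English description precedes it below -/
import Mathlib

section
/- Let β ∈ (0,1) and set C_β = (1+β)/(1−β). For each dimension d, let N = N(d) be a number of samples with N(d) ≪ exp(d/(2(C_β² + 2))) (i.e., N(d)·exp(−d/(2(C_β² + 2))) → 0 as d → ∞). Let x_1, …, x_N and ε be i.i.d. samples from the standard Gaussian distribution N(0, I_d) on ℝ^d, and define z = β·x_1 + (1−β)·ε. Then the probability that z lies outside the convex hull Conv({x_1, …, x_N}) tends to 1 as d → ∞: lim_{d→∞} P(z ∉ Conv({x_1, …, x_N})) = 1. -/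
open MeasureTheory ProbabilityTheory Filter
open scoped RealInnerProductSpace

/-- The standard Gaussian distribution `N(0, I_d)` on `ℝ^d`, i.e. the product of `d`
independent standard normal distributions `N(0,1)`. -/
noncomputable def stdGaussian (d : ℕ) : Measure (EuclideanSpace ℝ (Fin d)) :=
  (Measure.pi fun _ : Fin d => gaussianReal 0 1).map
    (MeasurableEquiv.toLp 2 (Fin d → ℝ))

/-!
If `z = β • x₁ + (1 - β) • ε` lies in the convex hull of the `xᵢ`, then testing against `ε` gives
`⟪ε, z⟫ ≤ M := maxᵢ |⟪ε, xᵢ⟫|`, while `⟪ε, z⟫ ≥ (1 - β) ‖ε‖² - β M`; hence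
`‖ε‖² ≤ C_β |⟪ε, xᵢ⟫|` for some `i`. Put `a = C_β² / (C_β² + 2) < 1`. Either `‖ε‖² ≤ a d`,
which by a Chernoff bound for the χ² distribution has probability at most
`(√a · e^{(1 - a)/2})^d → 0`, or `|⟪ε, xᵢ⟫| ≥ (√(a d) / C_β) ‖ε‖` for some `i`. Given `ε`, the
variable `⟪ε, xᵢ⟫` is `N(0, ‖ε‖²)` by independence, so each of these `N` events has probability
at most `2 exp (-d / (2 (C_β² + 2)))`, and the union bound concludes.
-/

open Real
open scoped NNReal

lemma stdGaussian_eq_stdGaussian_euclideanSpace (d : ℕ) :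
    _root_.stdGaussian d = ProbabilityTheory.stdGaussian (EuclideanSpace ℝ (Fin d)) :=
  map_pi_eq_stdGaussian

lemma hasSubgaussianMGF_id_gaussianReal (v : ℝ≥0) :
    HasSubgaussianMGF id v (gaussianReal 0 v) where
  integrable_exp_mul t := integrable_exp_mul_gaussianReal t
  mgf_le t := by simp [mgf_id_gaussianReal]

-- For `l ≤ -1/2` both sides are junk zeros: the integrand is not integrable and `√` of a
-- nonpositive number is `0`.
lemma integral_exp_neg_mul_sq_gaussianReal (l : ℝ) :
    ∫ t, exp (-l * t ^ 2) ∂gaussianReal 0 1 = (√(1 + 2 * l))⁻¹ := by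
  have hpdf (t : ℝ) : gaussianPDFReal 0 1 t • exp (-l * t ^ 2) =
      (√(2 * π))⁻¹ * exp (-(l + 1 / 2) * t ^ 2) := by
    rw [gaussianPDFReal_def, smul_eq_mul, mul_assoc, ← exp_add]
    simp only [NNReal.coe_one, mul_one, sub_zero]
    ring_nf
  simp_rw [integral_gaussianReal_eq_integral_smul one_ne_zero, hpdf, integral_const_mul,
    integral_gaussian, ← sqrt_inv]
  rw [← sqrt_mul (by positivity)]
  congr 1
  field_simp
  ring

section InnerProductSpace

variable {E : Type*} [NormedAddCommGroup E] [InnerProductSpace ℝ E]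

lemma norm_sq_sum_smul_orthonormalBasis {ι : Type*} [Fintype ι] (b : OrthonormalBasis ι ℝ E)
    (y : ι → ℝ) : ‖∑ i, y i • b i‖ ^ 2 = ∑ i, y i ^ 2 := by
  have := b.sum_repr_symm (WithLp.toLp 2 y)
  rw [this, LinearIsometryEquiv.norm_map, EuclideanSpace.real_norm_sq_eq]

lemma exists_mul_norm_sq_le_mul_abs_inner_of_mem_convexHull {ι : Type*} [Fintype ι]
    {x : ι → E} {i₀ : ι} {e : E} {β : ℝ} (hβ : 0 ≤ β)
    (h : β • x i₀ + (1 - β) • e ∈ convexHull ℝ (Set.range x)) :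
    ∃ i, (1 - β) * ‖e‖ ^ 2 ≤ (1 + β) * |⟪e, x i⟫| := by
  obtain ⟨i, -, hi⟩ := Finset.exists_max_image Finset.univ (fun i => |⟪e, x i⟫|) ⟨i₀, by simp⟩
  refine ⟨i, ?_⟩
  have hhull : convexHull ℝ (Set.range x) ⊆ {y | ⟪e, y⟫ ≤ |⟪e, x i⟫|} := by
    refine convexHull_min ?_ (convex_halfSpace_le (innerₛₗ ℝ e).isLinear _)
    rintro _ ⟨j, rfl⟩
    exact (le_abs_self _).trans (hi j (Finset.mem_univ j))
  have hz := hhull h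
  simp only [Set.mem_ofPred_eq, inner_add_right, real_inner_smul_right,
    real_inner_self_eq_norm_sq] at hz
  have hi₀ : -|⟪e, x i⟫| ≤ ⟪e, x i₀⟫ :=
    (neg_le_neg (hi i₀ (Finset.mem_univ _))).trans (neg_abs_le _)
  nlinarith [mul_le_mul_of_nonneg_left hi₀ hβ]

variable [FiniteDimensional ℝ E] [MeasurableSpace E] [BorelSpace E]

lemma map_inner_stdGaussian (e : E) :
    (stdGaussian E).map (fun x => ⟪e, x⟫) = gaussianReal 0 (‖e‖₊ ^ 2) := by
  have := IsGaussian.map_eq_gaussianReal (μ := stdGaussian E) (innerSL ℝ e)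
  simp only [integral_strongDual_stdGaussian, variance_dual_stdGaussian,
    innerSL_apply_norm] at this
  convert this using 2 <;> ext <;> simp

lemma hasSubgaussianMGF_inner_stdGaussian (e : E) :
    HasSubgaussianMGF (fun x => ⟪e, x⟫) (‖e‖₊ ^ 2) (stdGaussian E) :=
  (HasSubgaussianMGF.id_map_iff (by fun_prop)).1 <| by
    rw [map_inner_stdGaussian]; exact hasSubgaussianMGF_id_gaussianReal _

lemma stdGaussian_abs_inner_ge_le {e : E} (he : e ≠ 0) {s : ℝ} (hs : 0 ≤ s) :
    (stdGaussian E).real {x | s * ‖e‖ ≤ |⟪e, x⟫|} ≤ 2 * exp (-s ^ 2 / 2) := by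
  have hX := hasSubgaussianMGF_inner_stdGaussian e
  have hexp : exp (-(s * ‖e‖) ^ 2 / (2 * ↑(‖e‖₊ ^ 2))) = exp (-s ^ 2 / 2) := by
    have : ‖e‖ ≠ 0 := norm_ne_zero_iff.2 he
    congr 1
    push_cast
    field_simp
  have hs' : 0 ≤ s * ‖e‖ := by positivity
  calc (stdGaussian E).real {x | s * ‖e‖ ≤ |⟪e, x⟫|}
      ≤ (stdGaussian E).real ({x | s * ‖e‖ ≤ ⟪e, x⟫} ∪ {x | s * ‖e‖ ≤ -⟪e, x⟫}) := by
        refine measureReal_mono (fun x hx => ?_)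
        simpa [le_abs] using hx
    _ ≤ _ := measureReal_union_le _ _
    _ ≤ exp (-s ^ 2 / 2) + exp (-s ^ 2 / 2) := by
        gcongr
        · exact hexp ▸ hX.measure_ge_le hs'
        · exact hexp ▸ hX.neg.measure_ge_le hs'
    _ = 2 * exp (-s ^ 2 / 2) := by ring

lemma measureReal_abs_inner_ge_le_of_indepFun {Ω : Type*} [MeasurableSpace Ω] {P : Measure Ω}
    [IsProbabilityMeasure P] {X Y : Ω → E} (hX : Measurable X) (hY : Measurable Y)
    (hXY : IndepFun X Y P) (hYlaw : P.map Y = stdGaussian E) {s : ℝ} (hs : 0 ≤ s) :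
    P.real {ω | X ω ≠ 0 ∧ s * ‖X ω‖ ≤ |⟪X ω, Y ω⟫|} ≤ 2 * exp (-s ^ 2 / 2) := by
  set S : Set (E × E) := {p | p.1 ≠ 0 ∧ s * ‖p.1‖ ≤ |⟪p.1, p.2⟫|}
  have hS : MeasurableSet S :=
    (measurableSet_eq_fun measurable_fst measurable_const).compl.inter
      (measurableSet_le (f := fun p : E × E => s * ‖p.1‖) (by fun_prop) (by fun_prop))
  have hsection (e : E) : stdGaussian E (Prod.mk e ⁻¹' S) ≤
      ENNReal.ofReal (2 * exp (-s ^ 2 / 2)) := by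
    by_cases he : e = 0
    · simp [S, he]
    · rw [← ofReal_measureReal]
      exact ENNReal.ofReal_le_ofReal (by simpa [S, he] using stdGaussian_abs_inner_ge_le he hs)
  have hlaw : P.map (fun ω => (X ω, Y ω)) = (P.map X).prod (stdGaussian E) := by
    rw [← hYlaw]
    exact (indepFun_iff_map_prod_eq_prod_map_map hX.aemeasurable hY.aemeasurable).1 hXY
  refine ENNReal.toReal_le_of_le_ofReal (by positivity) ?_
  calc P {ω | X ω ≠ 0 ∧ s * ‖X ω‖ ≤ |⟪X ω, Y ω⟫|}
      = (P.map X).prod (stdGaussian E) S := by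
        rw [← hlaw, Measure.map_apply (hX.prodMk hY) hS]; rfl
    _ = ∫⁻ e, stdGaussian E (Prod.mk e ⁻¹' S) ∂(P.map X) :=
        Measure.prod_apply hS
    _ ≤ ∫⁻ _, ENNReal.ofReal (2 * exp (-s ^ 2 / 2)) ∂(P.map X) := lintegral_mono hsection
    _ = ENNReal.ofReal (2 * exp (-s ^ 2 / 2)) := by
        rw [lintegral_const, Measure.map_apply hX .univ, Set.preimage_univ, measure_univ,
          mul_one]

lemma integral_exp_neg_mul_norm_sq_stdGaussian (l : ℝ) :
    ∫ x, exp (-l * ‖x‖ ^ 2) ∂(stdGaussian E) =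
      (√(1 + 2 * l))⁻¹ ^ Module.finrank ℝ E := by
  rw [ProbabilityTheory.stdGaussian,
    integral_map (Measurable.aemeasurable (by fun_prop)) (by fun_prop)]
  simp_rw [norm_sq_sum_smul_orthonormalBasis, Finset.mul_sum, exp_sum]
  rw [integral_fintype_prod_eq_prod (f := fun _ t => exp (-l * t ^ 2))]
  simp only [integral_exp_neg_mul_sq_gaussianReal, Finset.prod_const, Finset.card_univ,
    Fintype.card_fin]

lemma stdGaussian_norm_sq_le_le {a : ℝ} (ha0 : 0 < a) (ha1 : a ≤ 1) :
    (stdGaussian E).real {x | ‖x‖ ^ 2 ≤ a * Module.finrank ℝ E} ≤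
      (√a * exp ((1 - a) / 2)) ^ Module.finrank ℝ E := by
  set n := Module.finrank ℝ E
  set l := (1 - a) / (2 * a)
  have hl : 0 ≤ l := div_nonneg (by linarith) (by positivity)
  have hmgf : mgf (fun x => ‖x‖ ^ 2) (stdGaussian E) (-l) = √a ^ n := by
    rw [mgf, integral_exp_neg_mul_norm_sq_stdGaussian, ← sqrt_inv]
    congr 2
    simp only [l]
    field_simp
    ring
  have hint : Integrable (fun x => exp (-l * ‖x‖ ^ 2)) (stdGaussian E) := by
    rw [← mgf_pos_iff, hmgf]
    positivity
  calc (stdGaussian E).real {x | ‖x‖ ^ 2 ≤ a * n}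
      ≤ exp (-(-l) * (a * n)) * √a ^ n := hmgf ▸ measure_le_le_exp_mul_mgf _ (by linarith) hint
    _ = (√a * exp ((1 - a) / 2)) ^ n := by
      rw [mul_pow, ← exp_nat_mul, mul_comm]
      congr 2
      simp only [l]
      field_simp

lemma one_sub_le_measureReal_notMem_convexHull {Ω : Type*} [MeasurableSpace Ω] {P : Measure Ω}
    [IsProbabilityMeasure P] {ι : Type*} [Fintype ι] {x : ι → Ω → E} {ε : Ω → E}
    (hx : ∀ i, Measurable (x i)) (hε : Measurable ε) (hindep : ∀ i, IndepFun ε (x i) P)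
    (hlaw : ∀ i, P.map (x i) = stdGaussian E) (i₀ : ι) {β : ℝ} (hβ0 : 0 ≤ β)
    (hβ1 : β ≤ 1) {r : ℝ} (hr : 0 ≤ r) :
    1 - (P.real {ω | ‖ε ω‖ ≤ r} +
        Fintype.card ι * (2 * exp (-((1 - β) / (1 + β) * r) ^ 2 / 2))) ≤
      P.real {ω | β • x i₀ ω + (1 - β) • ε ω ∉ convexHull ℝ (Set.range fun i => x i ω)} := by
  set s := (1 - β) / (1 + β) * r
  have hs : 0 ≤ s := mul_nonneg (div_nonneg (by linarith) (by linarith)) hr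
  set A := {ω | ‖ε ω‖ ≤ r}
  set B := fun i => {ω | ε ω ≠ 0 ∧ s * ‖ε ω‖ ≤ |⟪ε ω, x i ω⟫|}
  have hA : MeasurableSet A := measurableSet_le (by fun_prop) measurable_const
  have hB (i : ι) : MeasurableSet (B i) :=
    (measurableSet_eq_fun hε measurable_const).compl.inter
      (measurableSet_le (f := fun ω => s * ‖ε ω‖) (by fun_prop) (by fun_prop))
  have hcover : (A ∪ ⋃ i, B i)ᶜ ⊆
      {ω | β • x i₀ ω + (1 - β) • ε ω ∉ convexHull ℝ (Set.range fun i => x i ω)} := by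
    intro ω hω hmem
    obtain ⟨i, hi⟩ := exists_mul_norm_sq_le_mul_abs_inner_of_mem_convexHull hβ0 hmem
    refine hω (or_iff_not_imp_left.2 fun hrε => Set.mem_iUnion.2 ⟨i, ?_, ?_⟩)
    · exact norm_pos_iff.1 (hr.trans_lt (not_le.1 hrε))
    · have hs' : (1 + β) * s = (1 - β) * r := by
        simp only [s]
        field_simp
      refine le_of_mul_le_mul_left ?_ (show 0 < 1 + β by linarith)
      calc (1 + β) * (s * ‖ε ω‖) = (1 - β) * (r * ‖ε ω‖) := by rw [← mul_assoc, hs', mul_assoc]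
        _ ≤ (1 - β) * ‖ε ω‖ ^ 2 := by
          rw [sq]
          gcongr
          exact (not_le.1 hrε).le
        _ ≤ (1 + β) * |⟪ε ω, x i ω⟫| := hi
  calc 1 - (P.real A + Fintype.card ι * (2 * exp (-s ^ 2 / 2)))
      ≤ 1 - (P.real A + ∑ i, P.real (B i)) := by
        gcongr
        calc ∑ i, P.real (B i) ≤ ∑ _i : ι, 2 * exp (-s ^ 2 / 2) := Finset.sum_le_sum fun i _ =>
              measureReal_abs_inner_ge_le_of_indepFun hε (hx i) (hindep i) (hlaw i) hs
          _ = _ := by simp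
    _ ≤ 1 - P.real (A ∪ ⋃ i, B i) := by
        gcongr
        exact (measureReal_union_le _ _).trans (by gcongr; exact measureReal_iUnion_fintype_le _)
    _ = P.real (A ∪ ⋃ i, B i)ᶜ := (probReal_compl_eq_one_sub (hA.union (.iUnion hB))).symm
    _ ≤ _ := measureReal_mono hcover

end InnerProductSpace

lemma tendsto_stdGaussian_norm_sq_le {a : ℝ} (ha0 : 0 < a) (ha1 : a < 1) :
    Tendsto (fun d : ℕ => (stdGaussian (EuclideanSpace ℝ (Fin d))).real
      {x | ‖x‖ ^ 2 ≤ a * d}) atTop (nhds 0) := by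
  have hρ : √a * exp ((1 - a) / 2) < 1 := by
    have hsq : (√a * exp ((1 - a) / 2)) ^ 2 = a * exp (1 - a) := by
      rw [mul_pow, sq_sqrt ha0.le, ← exp_nat_mul]
      ring_nf
    have : a * exp (1 - a) < 1 := by
      have := add_one_lt_exp (x := a - 1) (by linarith)
      calc a * exp (1 - a) < exp (a - 1) * exp (1 - a) := by gcongr; linarith
        _ = 1 := by rw [← exp_add]; norm_num
    nlinarith [sq_nonneg (√a * exp ((1 - a) / 2)), show 0 ≤ √a * exp ((1 - a) / 2) by positivity]
  refine squeeze_zero (fun _ => measureReal_nonneg) (fun d => ?_)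
    (tendsto_pow_atTop_nhds_zero_of_lt_one (by positivity) hρ)
  simpa using stdGaussian_norm_sq_le_le (E := EuclideanSpace ℝ (Fin d)) ha0 ha1.le

/-- Let `β ∈ (0,1)`, `C_β = (1+β)/(1-β)`, and for each dimension `d` let
`N d ≪ exp(d/(2(C_β² + 2)))` in the sense that `N d · exp(-d/(2(C_β² + 2))) → 0`.
If, for each `d`, `x_1, …, x_{N d}, ε` are i.i.d. `N(0, I_d)` random vectors and
`z = β • x_1 + (1-β) • ε`, then `P(z ∉ Conv({x_1, …, x_{N d}})) → 1` as `d → ∞`. -/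
theorem groot_prob_not_mem_convexHull_tendsto_one
    (β : ℝ) (hβ : β ∈ Set.Ioo (0 : ℝ) 1)
    (N : ℕ → ℕ) (hNpos : ∀ d, 0 < N d)
    (hN : Tendsto
      (fun d : ℕ => (N d : ℝ) * Real.exp (-(d / (2 * (((1 + β) / (1 - β)) ^ 2 + 2)))))
      atTop (nhds 0))
    (Ω : ℕ → Type*) [∀ d, MeasurableSpace (Ω d)]
    (P : ∀ d, Measure (Ω d)) [∀ d, IsProbabilityMeasure (P d)]
    (x : ∀ d, Fin (N d) → Ω d → EuclideanSpace ℝ (Fin d))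
    (ε : ∀ d, Ω d → EuclideanSpace ℝ (Fin d))
    (hxmeas : ∀ d i, Measurable (x d i)) (hεmeas : ∀ d, Measurable (ε d))
    (hindep : ∀ d, iIndepFun
      (Fin.cons (ε d) (x d) : Fin (N d + 1) → Ω d → EuclideanSpace ℝ (Fin d)) (P d))
    (hlawx : ∀ d i, Measure.map (x d i) (P d) = stdGaussian d)
    (hlawε : ∀ d, Measure.map (ε d) (P d) = stdGaussian d) :
    Tendsto
      (fun d : ℕ => P d {ω | β • x d ⟨0, hNpos d⟩ ω + (1 - β) • ε d ω ∉
        convexHull ℝ (Set.range fun i => x d i ω)})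
      atTop (nhds 1) := by
  obtain ⟨hβ0, hβ1⟩ := hβ
  simp only [stdGaussian_eq_stdGaussian_euclideanSpace] at hlawx hlawε
  set C := (1 + β) / (1 - β)
  have hC : 0 < C := div_pos (by linarith) (by linarith)
  set a := C ^ 2 / (C ^ 2 + 2)
  have ha0 : 0 < a := by positivity
  have ha1 : a < 1 := (div_lt_one (by positivity)).2 (by linarith)
  have hlower (d : ℕ) : 1 - ((stdGaussian (EuclideanSpace ℝ (Fin d))).real {y | ‖y‖ ^ 2 ≤ a * d} +
      N d * (2 * exp (-(d / (2 * (C ^ 2 + 2)))))) ≤ (P d).real {ω | β • x d ⟨0, hNpos d⟩ ω +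
        (1 - β) • ε d ω ∉ convexHull ℝ (Set.range fun i => x d i ω)} := by
    have hindep' (i : Fin (N d)) : IndepFun (ε d) (x d i) (P d) := by
      simpa using (hindep d).indepFun (Fin.succ_ne_zero i).symm
    convert one_sub_le_measureReal_notMem_convexHull (hxmeas d) (hεmeas d) hindep' (hlawx d)
      ⟨0, hNpos d⟩ hβ0.le hβ1.le (sqrt_nonneg (a * d)) using 3
    · rw [← hlawε d, map_measureReal_apply (hεmeas d)
        (measurableSet_le (f := fun y => ‖y‖ ^ 2) (by fun_prop) measurable_const)]
      congr 1 with ω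
      exact (le_sqrt (norm_nonneg _) (by positivity)).symm
    · rw [Fintype.card_fin, mul_pow, sq_sqrt (by positivity)]
      congr 3
      simp only [a, C]
      field_simp
  refine (ENNReal.tendsto_toReal_iff (fun _ => measure_ne_top _ _) ENNReal.one_ne_top).1 <|
    tendsto_of_tendsto_of_tendsto_of_le_of_le ?_ tendsto_const_nhds hlower
      fun _ => measureReal_le_one
  simpa [mul_left_comm] using
    tendsto_const_nhds.sub ((tendsto_stdGaussian_norm_sq_le ha0 ha1).add (hN.const_mul 2))
end

section
/- Let x_1, …, x_N ∈ ℝ^d, let ε ∈ ℝ^d, let β ∈ (0,1), and define z = β·x_1 + (1−β)·ε. If z belongs to the convex hull Conv({x_1, …, x_N}), then ‖ε‖² ≤ ((1+β)/(1−β)) · max_{1 ≤ i ≤ N} |⟨ε, x_i⟩|, where ⟨·,·⟩ is the Euclidean inner product and ‖·‖ the Euclidean norm. -/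
open MeasureTheory ProbabilityTheory Filter
open scoped RealInnerProductSpace

/-- If `z = β • x₁ + (1-β) • ε` lies in the convex hull of `{x_1, …, x_N}`, then
`‖ε‖² ≤ ((1+β)/(1-β)) * max_i |⟨ε, x_i⟩|`. -/
theorem groot_norm_sq_le_of_mem_convexHull {d N : ℕ} (hN : 0 < N)
    (x : Fin N → EuclideanSpace ℝ (Fin d)) (ε : EuclideanSpace ℝ (Fin d))
    (β : ℝ) (hβ : β ∈ Set.Ioo (0 : ℝ) 1)
    (hmem : β • x ⟨0, hN⟩ + (1 - β) • ε ∈ convexHull ℝ (Set.range x)) :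
    ‖ε‖ ^ 2 ≤ (1 + β) / (1 - β) *
      Finset.univ.sup' (Finset.univ_nonempty_iff.mpr (Fin.pos_iff_nonempty.mp hN))
        (fun i => |(⟪ε, x i⟫)|) := by
  obtain ⟨hβ0, hβ1⟩ := hβ
  set M := Finset.univ.sup' (Finset.univ_nonempty_iff.mpr (Fin.pos_iff_nonempty.mp hN))
    (fun i => |(⟪ε, x i⟫)|) with hM
  have hle : ∀ i, |(⟪ε, x i⟫)| ≤ M := fun i =>
    Finset.le_sup' (f := fun i => |(⟪ε, x i⟫)|) (Finset.mem_univ i)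
  have hM0 : 0 ≤ M := le_trans (abs_nonneg _) (hle ⟨0, hN⟩)
  have hconv : Convex ℝ {y : EuclideanSpace ℝ (Fin d) | ⟪ε, y⟫ ≤ M} := by
    apply convex_halfSpace_le
    exact ⟨fun a b => inner_add_right _ _ _, fun c a => real_inner_smul_right _ _ _⟩
  have hsub : Set.range x ⊆ {y : EuclideanSpace ℝ (Fin d) | ⟪ε, y⟫ ≤ M} := by
    rintro y ⟨i, rfl⟩
    exact le_trans (le_abs_self _) (hle i)
  have hz : ⟪ε, β • x ⟨0, hN⟩ + (1 - β) • ε⟫ ≤ M :=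
    convexHull_min hsub hconv hmem
  rw [inner_add_right, real_inner_smul_right, real_inner_smul_right,
    real_inner_self_eq_norm_sq] at hz
  have h1 : -⟪ε, x ⟨0, hN⟩⟫ ≤ M := le_trans (neg_le_abs _) (hle _)
  have h2 : (1 - β) * ‖ε‖ ^ 2 ≤ (1 + β) * M := by nlinarith
  have hpos : (0 : ℝ) < 1 - β := by linarith
  rw [div_mul_eq_mul_div, le_div_iff₀ hpos]
  nlinarith
end

section
/- Let β ∈ (0,1) and set C_β = (1+β)/(1−β). Let x_1, …, x_N and ε be i.i.d. samples from the standard Gaussian distribution N(0, I_d) on ℝ^d, and define z = β·x_1 + (1−β)·ε. Then P(z ∈ Conv({x_1, …, x_N})) ≤ P(‖ε‖² ≤ C_β · max_{1 ≤ i ≤ N} |⟨ε, x_i⟩|). -/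
/-! The inclusion of events holds pointwise. A point `z` of the convex hull of the `x_i`
satisfies `⟪ε, z⟫ ≤ max_i ⟪ε, x_i⟫`; for `z = β • x_1 + (1 - β) • ε` the left side is
`β ⟪ε, x_1⟫ + (1 - β) ‖ε‖²`, and bounding `-β ⟪ε, x_1⟫` by `β max_i |⟪ε, x_i⟫|` gives
`(1 - β) ‖ε‖² ≤ (1 + β) max_i |⟪ε, x_i⟫|`. -/

open MeasureTheory ProbabilityTheory Filter
open scoped RealInnerProductSpace

section InnerProductSpace

variable {E : Type*} [NormedAddCommGroup E] [InnerProductSpace ℝ E]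

theorem inner_le_of_mem_convexHull {s : Set E} {v y : E} {M : ℝ}
    (hs : ∀ x ∈ s, ⟪v, x⟫ ≤ M) (hy : y ∈ convexHull ℝ s) : ⟪v, y⟫ ≤ M :=
  convexHull_min hs (convex_halfSpace_le (innerₗ E v).isLinear M) hy

theorem norm_sq_le_of_smul_add_mem_convexHull {ι : Type*} (f : ι → E) (i₀ : ι) (e : E)
    {β M : ℝ} (hβ0 : 0 ≤ β) (hβ1 : β < 1) (hM : ∀ i, |⟪e, f i⟫| ≤ M)
    (hmem : β • f i₀ + (1 - β) • e ∈ convexHull ℝ (Set.range f)) :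
    ‖e‖ ^ 2 ≤ (1 + β) / (1 - β) * M := by
  have hz : β * ⟪e, f i₀⟫ + (1 - β) * ‖e‖ ^ 2 ≤ M := by
    have := inner_le_of_mem_convexHull
      (by rintro _ ⟨i, rfl⟩; exact (le_abs_self _).trans (hM i)) hmem
    rwa [inner_add_right, real_inner_smul_right, real_inner_smul_right,
      real_inner_self_eq_norm_sq] at this
  have hβx : -(β * M) ≤ β * ⟪e, f i₀⟫ := by
    rw [← mul_neg]
    exact mul_le_mul_of_nonneg_left (neg_le_of_abs_le (hM i₀)) hβ0
  rw [div_mul_eq_mul_div, le_div_iff₀ (by linarith)]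
  linarith

end InnerProductSpace

theorem groot_prob_mem_convexHull_le_general (d N : ℕ) (hN : 0 < N)
    (β : ℝ) (hβ : β ∈ Set.Ioo (0 : ℝ) 1)
    {Ω : Type*} [MeasurableSpace Ω] (P : Measure Ω)
    (x : Fin N → Ω → EuclideanSpace ℝ (Fin d)) (ε : Ω → EuclideanSpace ℝ (Fin d)) :
    P {ω | β • x ⟨0, hN⟩ ω + (1 - β) • ε ω ∈ convexHull ℝ (Set.range fun i => x i ω)} ≤
      P {ω | ‖ε ω‖ ^ 2 ≤ (1 + β) / (1 - β) *
        Finset.univ.sup' (Finset.univ_nonempty_iff.mpr (Fin.pos_iff_nonempty.mp hN))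
          (fun i => |(⟪ε ω, x i ω⟫)|)} :=
  measure_mono fun ω hω =>
    norm_sq_le_of_smul_add_mem_convexHull (fun i => x i ω) ⟨0, hN⟩ (ε ω) hβ.1.le hβ.2
      (fun i => Finset.le_sup' (fun j => |(⟪ε ω, x j ω⟫)|) (Finset.mem_univ i)) hω

/-- If `x_1, …, x_N, ε` are i.i.d. `N(0, I_d)` random vectors, `β ∈ (0,1)`,
`C_β = (1+β)/(1-β)` and `z = β • x_1 + (1-β) • ε`, then
`P(z ∈ Conv({x_1, …, x_N})) ≤ P(‖ε‖² ≤ C_β · max_i |⟨ε, x_i⟩|)`. -/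
theorem groot_prob_mem_convexHull_le (d N : ℕ) (hN : 0 < N)
    (β : ℝ) (hβ : β ∈ Set.Ioo (0 : ℝ) 1)
    {Ω : Type*} [MeasurableSpace Ω] (P : Measure Ω) [IsProbabilityMeasure P]
    (x : Fin N → Ω → EuclideanSpace ℝ (Fin d)) (ε : Ω → EuclideanSpace ℝ (Fin d))
    (hxmeas : ∀ i, Measurable (x i)) (hεmeas : Measurable ε)
    (hindep : iIndepFun
      (Fin.cons ε x : Fin (N + 1) → Ω → EuclideanSpace ℝ (Fin d)) P)
    (hlawx : ∀ i, Measure.map (x i) P = stdGaussian d)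
    (hlawε : Measure.map ε P = stdGaussian d) :
    P {ω | β • x ⟨0, hN⟩ ω + (1 - β) • ε ω ∈ convexHull ℝ (Set.range fun i => x i ω)} ≤
      P {ω | ‖ε ω‖ ^ 2 ≤ (1 + β) / (1 - β) *
        Finset.univ.sup' (Finset.univ_nonempty_iff.mpr (Fin.pos_iff_nonempty.mp hN))
          (fun i => |(⟪ε ω, x i ω⟫)|)} :=
  groot_prob_mem_convexHull_le_general d N hN β hβ P x ε
end
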